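/- For every n ∈ ℕ and every family of vectors {ξ_ε : ε ∈ Λ^d} ⊂ H one has ‖∑_{ε ∈ Λ^d} C_n^{(ε)} ξ_ε‖² = ∑_{ε ∈ Λ^d} ‖C_n^{(ε)} ξ_ε‖². -/

import Mathlib

/- Common setup: quantum Bernoulli noises on `ℋ = ℓ²(Γ)`, `Γ` = finite subsets of `ℕ`. -/

noncomputable section

open ContinuousLinearMap Filter

/-- The space `ℋ = ℓ²(Γ)` of square-integrable Bernoulli functionals,
where `Γ` is the set of finite subsets of `ℕ`. -/
abbrev ℋ : Type := lp (fun _ : Finset ℕ => ℂ) 2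

/-- The canonical orthonormal basis `{Z_σ : σ ∈ Γ}` of `ℋ`. -/
def Z (σ : Finset ℕ) : ℋ := lp.single 2 σ 1

/-- `QBN a` says that `a k` is the annihilation operator `∂_k` acting on Bernoulli
functionals: `∂_k Z_σ = 1_σ(k) Z_{σ\k}` and `∂_k* Z_σ = (1 - 1_σ(k)) Z_{σ∪k}`. -/
def QBN (a : ℕ → ℋ →L[ℂ] ℋ) : Prop :=
  (∀ (k : ℕ) (σ : Finset ℕ), a k (Z σ) = if k ∈ σ then Z (σ.erase k) else 0) ∧
  (∀ (k : ℕ) (σ : Finset ℕ), adjoint (a k) (Z σ) = if k ∈ σ then 0 else Z (insert k σ))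

/-- `L_n = (∂_n* + ∂_n - I)/2`. -/
def Lop (a : ℕ → ℋ →L[ℂ] ℋ) (n : ℕ) : ℋ →L[ℂ] ℋ := (2 : ℂ)⁻¹ • (adjoint (a n) + a n - 1)

/-- `R_n = (∂_n* + ∂_n + I)/2`. -/
def Rop (a : ℕ → ℋ →L[ℂ] ℋ) (n : ℕ) : ℋ →L[ℂ] ℋ := (2 : ℂ)⁻¹ • (adjoint (a n) + a n + 1)

/-- `Λ = {-1, 1} ⊆ ℤ`. -/
def Lam : Finset ℤ := {-1, 1}

/-- `Λ^d`, as a finite set of vectors in `ℤ^d`. -/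
def LamD (d : ℕ) : Finset (Fin d → ℤ) := Fintype.piFinset fun _ => Lam

/-- `B_n^{(ε)}`: equals `L_n` if `ε = -1` and `R_n` if `ε = +1`. -/
def Bop (a : ℕ → ℋ →L[ℂ] ℋ) (n : ℕ) (e : ℤ) : ℋ →L[ℂ] ℋ :=
  if e = -1 then Lop a n else Rop a n

/-- A characterization of the `d`-fold Hilbert-space tensor power of `Hs`:
`tpv` is the multilinear map `(u_1, …, u_d) ↦ u_1 ⊗ ⋯ ⊗ u_d`, which satisfies
`⟪⊗u_j, ⊗v_j⟫ = ∏ ⟪u_j, v_j⟫` and has dense span, and `tp` sends a `d`-tuple of bounded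
operators to their tensor product operator, i.e. `(⊗A_j)(⊗u_j) = ⊗(A_j u_j)`. -/
def IsTensorD {Hs : Type} [NormedAddCommGroup Hs] [InnerProductSpace ℂ Hs]
    {d : ℕ} {Hd : Type} [NormedAddCommGroup Hd] [InnerProductSpace ℂ Hd]
    (tpv : MultilinearMap ℂ (fun _ : Fin d => Hs) Hd)
    (tp : (Fin d → Hs →L[ℂ] Hs) → (Hd →L[ℂ] Hd)) : Prop :=
  (∀ u v : Fin d → Hs, (@inner ℂ _ _ (tpv u) (tpv v)) = ∏ j, (@inner ℂ _ _ (u j) (v j))) ∧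
  ((Submodule.span ℂ (Set.range fun u => tpv u)).topologicalClosure = ⊤) ∧
  (∀ (A : Fin d → Hs →L[ℂ] Hs) (u : Fin d → Hs), tp A (tpv u) = tpv fun j => A j (u j))

/-- Conjugation of an operator by a unitary isomorphism `K`: `T ↦ K T K⁻¹`. -/
def conjK {Hs Hd : Type} [NormedAddCommGroup Hs] [InnerProductSpace ℂ Hs]
    [NormedAddCommGroup Hd] [InnerProductSpace ℂ Hd]
    (K : Hd ≃ₗᵢ[ℂ] Hs) (T : Hd →L[ℂ] Hd) : Hs →L[ℂ] Hs :=
  K.toLinearIsometry.toContinuousLinearMap ∘L T ∘L K.symm.toLinearIsometry.toContinuousLinearMap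

/-- `C_n^{(ε)} = K (B_n^{(ε_1)} ⊗ ⋯ ⊗ B_n^{(ε_d)}) K⁻¹` for `ε ∈ Λ^d`. -/
def Cop {d : ℕ} {Hd : Type} [NormedAddCommGroup Hd] [InnerProductSpace ℂ Hd]
    (a : ℕ → ℋ →L[ℂ] ℋ) (tp : (Fin d → ℋ →L[ℂ] ℋ) → (Hd →L[ℂ] Hd))
    (K : Hd ≃ₗᵢ[ℂ] ℋ) (n : ℕ) (v : Fin d → ℤ) : ℋ →L[ℂ] ℋ :=
  conjK K (tp fun j => Bop a n (v j))

/-- The trace of an operator computed relative to an orthonormal basis `b`: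
`Tr T = ∑_i Re ⟪b i, T (b i)⟫` (for positive operators this is the genuine trace). -/
def trB {E : Type} [NormedAddCommGroup E] [InnerProductSpace ℂ E] {ι : Type}
    (b : ι → E) (T : E →L[ℂ] E) : ℝ :=
  ∑' i, (@inner ℂ _ _ (b i) (T (b i))).re

/-- Finiteness (summability) of the trace of `T` relative to the orthonormal basis `b`;
for a positive operator `T` this says exactly that `T` is of trace class. -/
def HasFiniteTrace {E : Type} [NormedAddCommGroup E] [InnerProductSpace ℂ E] {ι : Type}
    (b : ι → E) (T : E →L[ℂ] E) : Prop :=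
  Summable fun i => (@inner ℂ _ _ (b i) (T (b i))).re

/-- The trace on `ℋ`, computed in the canonical ONB `{Z_σ}`. -/
def trH : (ℋ →L[ℂ] ℋ) → ℝ := trB Z

/-- A nucleus with site space `X` on a Hilbert space with orthonormal basis `b`: a family of
positive trace-class operators `ω x` with `∑_x Tr[ω x] = 1`. -/
def IsNucleusOn {E : Type} [NormedAddCommGroup E] [InnerProductSpace ℂ E] [CompleteSpace E]
    {ι X : Type} (b : ι → E) (ω : X → E →L[ℂ] E) : Prop :=
  (∀ x, (ω x).IsPositive) ∧ (∀ x, HasFiniteTrace b (ω x)) ∧ HasSum (fun x => trB b (ω x)) 1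

/-- The one-dimensional map `𝔍_n`: `(𝔍_n ρ)(x) = L_n ρ(x+1) L_n + R_n ρ(x-1) R_n`. -/
def Jmap1 (a : ℕ → ℋ →L[ℂ] ℋ) (n : ℕ) (ρ : ℤ → ℋ →L[ℂ] ℋ) : ℤ → ℋ →L[ℂ] ℋ :=
  fun x => Lop a n * ρ (x + 1) * Lop a n + Rop a n * ρ (x - 1) * Rop a n

/-- The `d`-dimensional map `𝔍_n^{(d)}`:
`(𝔍_n^{(d)} ω)(x) = ∑_{ε ∈ Λ^d} C_n^{(ε)} ω(x-ε) C_n^{(ε)}`. -/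
def JmapD {d : ℕ} {Hd : Type} [NormedAddCommGroup Hd] [InnerProductSpace ℂ Hd]
    (a : ℕ → ℋ →L[ℂ] ℋ) (tp : (Fin d → ℋ →L[ℂ] ℋ) → (Hd →L[ℂ] Hd)) (K : Hd ≃ₗᵢ[ℂ] ℋ)
    (n : ℕ) (ω : (Fin d → ℤ) → ℋ →L[ℂ] ℋ) : (Fin d → ℤ) → ℋ →L[ℂ] ℋ :=
  fun x => ∑ v ∈ LamD d, Cop a tp K n v * ω (x - v) * Cop a tp K n v

/-- The sequence `ρ⁽⁰⁾ = ρ`, `ρ⁽ⁿ⁺¹⁾ = 𝔍_n ρ⁽ⁿ⁾` generated by `ρ` and `(𝔍_n)`. -/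
def seqJ (a : ℕ → ℋ →L[ℂ] ℋ) (ρ : ℤ → ℋ →L[ℂ] ℋ) : ℕ → ℤ → ℋ →L[ℂ] ℋ
  | 0 => ρ
  | n + 1 => Jmap1 a n (seqJ a ρ n)

/-- Regularity of a 1-dimensional nucleus `ρ`:
`lim_n ∑_x e^{itx/√n} Tr[ρ⁽ⁿ⁾(x)] = e^{-t²/2}` for every real `t`. -/
def Regular (a : ℕ → ℋ →L[ℂ] ℋ) (ρ : ℤ → ℋ →L[ℂ] ℋ) : Prop :=
  ∀ t : ℝ, Tendsto (fun n : ℕ => ∑' x : ℤ,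
      Complex.exp (Complex.I * (t : ℂ) * (x : ℂ) / (Real.sqrt n : ℂ)) * (trH (seqJ a ρ n x) : ℂ))
    atTop (nhds (Complex.exp (-(t : ℂ) ^ 2 / 2)))

/-- The rank-one (Dirac) operator `|u⟩⟨v| : w ↦ ⟪v, w⟫ u`. -/
def dyad {E : Type} [NormedAddCommGroup E] [InnerProductSpace ℂ E] (u v : E) : E →L[ℂ] E :=
  (toSpanSingleton ℂ u).comp (innerSL ℂ v)

/-- `ℓ²(ℤ^d)`. -/
abbrev l2Z (d : ℕ) : Type := lp (fun _ : Fin d → ℤ => ℂ) 2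

/-- The canonical orthonormal basis `{δ_x : x ∈ ℤ^d}` of `ℓ²(ℤ^d)`. -/
def deltaV {d : ℕ} (x : Fin d → ℤ) : l2Z d := lp.single 2 x 1

/-- A characterization of the Hilbert-space tensor product `E = ℓ²(ℤ^d) ⊗ Hs`:
`tv` is the bilinear map `(f, u) ↦ f ⊗ u`, with `⟪f⊗u, g⊗v⟫ = ⟪f,g⟫⟪u,v⟫` and dense span,
and `top2` sends a pair of bounded operators to their tensor product operator:
`(A ⊗ B)(f ⊗ u) = (A f) ⊗ (B u)`. -/
def IsTensor2 {d : ℕ} {Hs E : Type} [NormedAddCommGroup Hs] [InnerProductSpace ℂ Hs]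
    [NormedAddCommGroup E] [InnerProductSpace ℂ E]
    (tv : l2Z d →ₗ[ℂ] Hs →ₗ[ℂ] E)
    (top2 : (l2Z d →L[ℂ] l2Z d) → (Hs →L[ℂ] Hs) → (E →L[ℂ] E)) : Prop :=
  (∀ (f g : l2Z d) (u v : Hs),
      (@inner ℂ _ _ (tv f u) (tv g v)) = (@inner ℂ _ _ f g) * (@inner ℂ _ _ u v)) ∧
  ((Submodule.span ℂ {z : E | ∃ f u, z = tv f u}).topologicalClosure = ⊤) ∧
  (∀ (A : l2Z d →L[ℂ] l2Z d) (B : Hs →L[ℂ] Hs) (f : l2Z d) (u : Hs),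
      top2 A B (tv f u) = tv (A f) (B u))

/-- The orthonormal basis `{δ_x ⊗ b_κ}` of the tensor product `ℓ²(ℤ^d) ⊗ Hs` induced by the
canonical basis of `ℓ²(ℤ^d)` and an orthonormal basis `b` of `Hs`. -/
def tbasis {d : ℕ} {Hs E : Type} [NormedAddCommGroup Hs] [InnerProductSpace ℂ Hs]
    [NormedAddCommGroup E] [InnerProductSpace ℂ E]
    (tv : l2Z d →ₗ[ℂ] Hs →ₗ[ℂ] E) {κ : Type} (b : κ → Hs) : (Fin d → ℤ) × κ → E :=
  fun p => tv (deltaV p.1) (b p.2)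

/-- The Kraus operators `M^{(n)}_{x,y} = |δ_x⟩⟨δ_y| ⊗ C_n^{(x-y)}` if `x - y ∈ Λ^d`, else `0`. -/
def Mop {d : ℕ} {Hd E : Type} [NormedAddCommGroup Hd] [InnerProductSpace ℂ Hd]
    [NormedAddCommGroup E] [InnerProductSpace ℂ E]
    (a : ℕ → ℋ →L[ℂ] ℋ) (tp : (Fin d → ℋ →L[ℂ] ℋ) → (Hd →L[ℂ] Hd)) (K : Hd ≃ₗᵢ[ℂ] ℋ)
    (top2 : (l2Z d →L[ℂ] l2Z d) → (ℋ →L[ℂ] ℋ) → (E →L[ℂ] E))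
    (n : ℕ) (x y : Fin d → ℤ) : E →L[ℂ] E :=
  if x - y ∈ LamD d then top2 (dyad (deltaV x) (deltaV y)) (Cop a tp K n (x - y)) else 0

/-- The 1-dimensional nucleus `ρ_σ` concentrated at `0` with value `|Z_σ⟩⟨Z_σ|`. -/
def rhoPoint (σ : Finset ℕ) : ℤ → ℋ →L[ℂ] ℋ := fun x => if x = 0 then dyad (Z σ) (Z σ) else 0

/-- `ℓ²(ℤ^d; ℋ)`, the space of square-summable `ℋ`-valued functions on `ℤ^d`. -/
abbrev l2ZH (d : ℕ) : Type := lp (fun _ : Fin d → ℤ => ℋ) 2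

/-! Write `X = ∂_n* + ∂_n`. On the basis `{Z_σ}` it toggles `n ∈ σ`, so `X² = I`, hence
`L_n R_n = R_n L_n = (X² - I)/4 = 0`; as `L_n`, `R_n` are self-adjoint, `B^{(+)}` and `B^{(-)}`
have orthogonal ranges. For `ε ≠ ε'` in `Λ^d`, pick a coordinate `j` with `ε_j ≠ ε'_j`: on
elementary tensors `⟪⊗B^{(ε_i)} u_i, ⊗B^{(ε'_i)} v_i⟫ = ∏ ⟪B^{(ε_i)} u_i, B^{(ε'_i)} v_i⟫` has
a vanishing factor, so by density the operators `C^{(ε)}`, `C^{(ε')}` have orthogonal ranges,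
and the identity is Pythagoras' theorem. -/

theorem norm_sum_sq_eq_sum_norm_sq_of_pairwise_inner_eq_zero {𝕜 E ι : Type*} [RCLike 𝕜]
    [NormedAddCommGroup E] [InnerProductSpace 𝕜 E] (s : Finset ι) (f : ι → E)
    (hf : (s : Set ι).Pairwise fun i j => @inner 𝕜 _ _ (f i) (f j) = 0) :
    ‖∑ i ∈ s, f i‖ ^ 2 = ∑ i ∈ s, ‖f i‖ ^ 2 := by
  classical
  induction s using Finset.induction_on with
  | empty => simp
  | insert i s hi ih =>
    rw [Finset.coe_insert, Set.pairwise_insert] at hf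
    have horth : @inner 𝕜 _ _ (f i) (∑ j ∈ s, f j) = 0 := by
      rw [inner_sum]
      exact Finset.sum_eq_zero fun j hj => (hf.2 j hj (ne_of_mem_of_not_mem hj hi).symm).1
    rw [Finset.sum_insert hi, Finset.sum_insert hi, ← ih hf.1]
    simpa only [sq] using norm_add_sq_eq_norm_sq_add_norm_sq_of_inner_eq_zero _ _ horth

theorem ContinuousLinearMap.eq_zero_of_dense_span {𝕜 E F : Type*} [NontriviallyNormedField 𝕜]
    [NormedAddCommGroup E] [NormedSpace 𝕜 E] [NormedAddCommGroup F] [NormedSpace 𝕜 F]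
    {s : Set E} (hs : (Submodule.span 𝕜 s).topologicalClosure = ⊤) (T : E →L[𝕜] F)
    (h : ∀ x ∈ s, T x = 0) : T = 0 :=
  ext_on (by rwa [Submodule.dense_iff_topologicalClosure_eq_top]) h

theorem inner_apply_apply_eq_zero_of_dense_span {𝕜 E E' F : Type*} [RCLike 𝕜]
    [NormedAddCommGroup E] [NormedSpace 𝕜 E] [NormedAddCommGroup E'] [NormedSpace 𝕜 E']
    [NormedAddCommGroup F] [InnerProductSpace 𝕜 F] {s : Set E} {t : Set E'}
    (hs : (Submodule.span 𝕜 s).topologicalClosure = ⊤)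
    (ht : (Submodule.span 𝕜 t).topologicalClosure = ⊤) (S : E →L[𝕜] F) (T : E' →L[𝕜] F)
    (h : ∀ x ∈ s, ∀ y ∈ t, @inner 𝕜 _ _ (S x) (T y) = 0) (x : E) (y : E') :
    @inner 𝕜 _ _ (S x) (T y) = 0 := by
  have h_left : ∀ y ∈ t, ∀ x, @inner 𝕜 _ _ (T y) (S x) = 0 := fun y hy x => by
    have := (innerSL 𝕜 (T y) ∘L S).eq_zero_of_dense_span hs fun x hx => by
      simpa [inner_eq_zero_symm] using h x hx y hy
    simpa using congr($this x)
  have := (innerSL 𝕜 (S x) ∘L T).eq_zero_of_dense_span ht fun y hy => by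
    simpa [inner_eq_zero_symm] using h_left y hy x
  simpa using congr($this y)

theorem IsTensorD.inner_apply_apply_eq_zero {Hs : Type} [NormedAddCommGroup Hs]
    [InnerProductSpace ℂ Hs] {d : ℕ} {Hd : Type} [NormedAddCommGroup Hd] [InnerProductSpace ℂ Hd]
    {tpv : MultilinearMap ℂ (fun _ : Fin d => Hs) Hd} {tp : (Fin d → Hs →L[ℂ] Hs) → (Hd →L[ℂ] Hd)}
    (htp : IsTensorD tpv tp) {A B : Fin d → Hs →L[ℂ] Hs} (j : Fin d)
    (hAB : ∀ u v, @inner ℂ _ _ (A j u) (B j v) = 0) (x y : Hd) :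
    @inner ℂ _ _ (tp A x) (tp B y) = 0 := by
  refine inner_apply_apply_eq_zero_of_dense_span htp.2.1 htp.2.1 _ _ ?_ x y
  rintro _ ⟨u, rfl⟩ _ ⟨v, rfl⟩
  rw [htp.2.2, htp.2.2, htp.1]
  exact Finset.prod_eq_zero (Finset.mem_univ j) (hAB (u j) (v j))

theorem inner_conjK_apply_conjK_apply {Hs Hd : Type} [NormedAddCommGroup Hs]
    [InnerProductSpace ℂ Hs] [NormedAddCommGroup Hd] [InnerProductSpace ℂ Hd]
    (K : Hd ≃ₗᵢ[ℂ] Hs) (T T' : Hd →L[ℂ] Hd) (x y : Hs) :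
    @inner ℂ _ _ (conjK K T x) (conjK K T' y) = @inner ℂ _ _ (T (K.symm x)) (T' (K.symm y)) :=
  K.inner_map_map _ _

def hilbertBasisZ : HilbertBasis (Finset ℕ) ℂ ℋ :=
  HilbertBasis.ofRepr (LinearIsometryEquiv.refl ℂ ℋ)

theorem coe_hilbertBasisZ : ⇑hilbertBasisZ = Z := by
  funext σ
  rw [← hilbertBasisZ.repr_symm_single]
  rfl

theorem ext_Z {T T' : ℋ →L[ℂ] ℋ} (h : ∀ σ, T (Z σ) = T' (Z σ)) : T = T' :=
  ext_on (Submodule.dense_iff_topologicalClosure_eq_top.mpr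
    (coe_hilbertBasisZ ▸ hilbertBasisZ.dense_span)) (by rintro _ ⟨σ, rfl⟩; exact h σ)

theorem isSelfAdjoint_Lop (a : ℕ → ℋ →L[ℂ] ℋ) (n : ℕ) : IsSelfAdjoint (Lop a n) := by
  rw [Lop, ← star_eq_adjoint]
  exact (IsSelfAdjoint.ofNat 2).inv₀.smul ((IsSelfAdjoint.star_add_self (a n)).sub (.one _))

theorem isSelfAdjoint_Rop (a : ℕ → ℋ →L[ℂ] ℋ) (n : ℕ) : IsSelfAdjoint (Rop a n) := by
  rw [Rop, ← star_eq_adjoint]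
  exact (IsSelfAdjoint.ofNat 2).inv₀.smul ((IsSelfAdjoint.star_add_self (a n)).add (.one _))

theorem isSelfAdjoint_Bop (a : ℕ → ℋ →L[ℂ] ℋ) (n : ℕ) (e : ℤ) : IsSelfAdjoint (Bop a n e) := by
  unfold Bop
  split_ifs
  exacts [isSelfAdjoint_Lop a n, isSelfAdjoint_Rop a n]

namespace QBN

variable {a : ℕ → ℋ →L[ℂ] ℋ}

theorem adjoint_add_apply_Z (ha : QBN a) (n : ℕ) (σ : Finset ℕ) :
    (adjoint (a n) + a n) (Z σ) = if n ∈ σ then Z (σ.erase n) else Z (insert n σ) := by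
  by_cases h : n ∈ σ <;> simp [ha.1, ha.2, h]

theorem adjoint_add_mul_self (ha : QBN a) (n : ℕ) :
    (adjoint (a n) + a n) * (adjoint (a n) + a n) = 1 := by
  refine ext_Z fun σ => ?_
  by_cases h : n ∈ σ <;>
    simp [ha.adjoint_add_apply_Z, h, Finset.insert_erase]

theorem Lop_mul_Rop (ha : QBN a) (n : ℕ) : Lop a n * Rop a n = 0 := by
  have hX := ha.adjoint_add_mul_self n
  rw [Lop, Rop, smul_mul_smul_comm, sub_one_mul, mul_add_one, hX, add_comm (1 : ℋ →L[ℂ] ℋ),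
    sub_self, smul_zero]

theorem Rop_mul_Lop (ha : QBN a) (n : ℕ) : Rop a n * Lop a n = 0 := by
  have hX := ha.adjoint_add_mul_self n
  rw [Lop, Rop, smul_mul_smul_comm, add_one_mul, mul_sub_one, hX, sub_add_sub_cancel, sub_self,
    smul_zero]

theorem inner_Bop_Bop_eq_zero (ha : QBN a) (n : ℕ) {e e' : ℤ} (he : e ∈ Lam) (he' : e' ∈ Lam)
    (hne : e ≠ e') (u v : ℋ) : @inner ℂ _ _ (Bop a n e u) (Bop a n e' v) = 0 := by
  have hBB : Bop a n e * Bop a n e' = 0 := by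
    simp only [Lam, Finset.mem_insert, Finset.mem_singleton] at he he'
    rcases he with rfl | rfl <;> rcases he' with rfl | rfl <;>
      simp_all [Bop, ha.Lop_mul_Rop, ha.Rop_mul_Lop]
  rw [← (isSelfAdjoint_Bop a n e).adjoint_eq, adjoint_inner_left, ← mul_apply_eq_comp, hBB,
    zero_apply, inner_zero_right]

theorem inner_Cop_Cop_eq_zero (ha : QBN a) {d : ℕ} {Hd : Type} [NormedAddCommGroup Hd]
    [InnerProductSpace ℂ Hd] {tpv : MultilinearMap ℂ (fun _ : Fin d => ℋ) Hd}
    {tp : (Fin d → ℋ →L[ℂ] ℋ) → (Hd →L[ℂ] Hd)} (htp : IsTensorD tpv tp) (K : Hd ≃ₗᵢ[ℂ] ℋ)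
    (n : ℕ) {v w : Fin d → ℤ} (hv : v ∈ LamD d) (hw : w ∈ LamD d) (hne : v ≠ w) (x y : ℋ) :
    @inner ℂ _ _ (Cop a tp K n v x) (Cop a tp K n w y) = 0 := by
  rw [LamD, Fintype.mem_piFinset] at hv hw
  obtain ⟨j, hj⟩ := Function.ne_iff.mp hne
  rw [Cop, Cop, inner_conjK_apply_conjK_apply]
  exact htp.inner_apply_apply_eq_zero j (ha.inner_Bop_Bop_eq_zero n (hv j) (hw j) hj) _ _

end QBN

theorem stmt17_general (a : ℕ → ℋ →L[ℂ] ℋ) (ha : QBN a)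
    (d : ℕ)
    (Hd : Type) [NormedAddCommGroup Hd] [InnerProductSpace ℂ Hd]
    (tpv : MultilinearMap ℂ (fun _ : Fin d => ℋ) Hd)
    (tp : (Fin d → ℋ →L[ℂ] ℋ) → (Hd →L[ℂ] Hd))
    (htp : IsTensorD tpv tp)
    (K : Hd ≃ₗᵢ[ℂ] ℋ) (n : ℕ) (ξ : (Fin d → ℤ) → ℋ) :
    ‖∑ v ∈ LamD d, Cop a tp K n v (ξ v)‖ ^ 2 =
      ∑ v ∈ LamD d, ‖Cop a tp K n v (ξ v)‖ ^ 2 :=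
  norm_sum_sq_eq_sum_norm_sq_of_pairwise_inner_eq_zero (𝕜 := ℂ) _ _ fun _ hv _ hw hne =>
    ha.inner_Cop_Cop_eq_zero htp K n hv hw hne _ _

/-- For every `n` and every family `{ξ_ε : ε ∈ Λ^d} ⊆ ℋ`,
`‖∑_{ε ∈ Λ^d} C_n^{(ε)} ξ_ε‖² = ∑_{ε ∈ Λ^d} ‖C_n^{(ε)} ξ_ε‖²`. -/
theorem stmt17 (a : ℕ → ℋ →L[ℂ] ℋ) (ha : QBN a)
    (d : ℕ) (hd : 2 ≤ d)
    (Hd : Type) [NormedAddCommGroup Hd] [InnerProductSpace ℂ Hd] [CompleteSpace Hd]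
    (tpv : MultilinearMap ℂ (fun _ : Fin d => ℋ) Hd)
    (tp : (Fin d → ℋ →L[ℂ] ℋ) → (Hd →L[ℂ] Hd))
    (htp : IsTensorD tpv tp)
    (K : Hd ≃ₗᵢ[ℂ] ℋ) (n : ℕ) (ξ : (Fin d → ℤ) → ℋ) :
    ‖∑ v ∈ LamD d, Cop a tp K n v (ξ v)‖ ^ 2 =
      ∑ v ∈ LamD d, ‖Cop a tp K n v (ξ v)‖ ^ 2 :=
  stmt17_general a ha d Hd tpv tp htp K n ξ
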